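/- arXiv:gr-qc/0107050 — 2 statements merged into one kernel-verified Lean document; each statement's English description precedes it below -/
import Mathlib

section
/- Under the GL(3,ℝ) action C ↦ φ_Λ(C) on structure constants, the components of the decomposition C = m·ε + ν∧δ transform as m ↦ |S|⁻¹ S m Sᵀ and ν ↦ Λᵀ ν, where S = Λ⁻¹. -/
open Matrix

/-- The Levi-Civita symbol on `Fin 3`. -/
noncomputable def leviCivita (i j k : Fin 3) : ℝ :=
  (((j:ℕ):ℝ) - ((i:ℕ):ℝ)) * (((k:ℕ):ℝ) - ((i:ℕ):ℝ)) * (((k:ℕ):ℝ) - ((j:ℕ):ℝ)) / 2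

/-- The induced `GL(3,ℝ)` action on structure constants. -/
noncomputable def phiAct (Λ : Matrix (Fin 3) (Fin 3) ℝ) (C : Fin 3 → Fin 3 → Fin 3 → ℝ) :
    Fin 3 → Fin 3 → Fin 3 → ℝ :=
  fun α μ ν => ∑ β, ∑ κ, ∑ l, Λ⁻¹ α β * Λ κ μ * Λ l ν * C β κ l

set_option maxHeartbeats 1000000 in
/-- `ε_{ρκλ} A ρ σ A κ μ A λ ν` summed gives `det A · ε_{σμν}`. -/
lemma eps_det (A : Matrix (Fin 3) (Fin 3) ℝ) (σ μ ν : Fin 3) :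
    ∑ ρ, ∑ κ, ∑ l, leviCivita ρ κ l * A ρ σ * A κ μ * A l ν
      = A.det * leviCivita σ μ ν := by
  fin_cases σ <;> fin_cases μ <;> fin_cases ν <;>
    · simp only [Fin.sum_univ_three, show ((⟨2, by omega⟩ : Fin 3)) = 2 from rfl,
        show ((⟨1, by omega⟩ : Fin 3)) = 1 from rfl, show ((⟨0, by omega⟩ : Fin 3)) = 0 from rfl]
      norm_num [leviCivita, Matrix.det_fin_three]
      try ring

/-- Contraction of the Levi-Civita symbol with two copies of an invertible matrix. -/
lemma eps_inv (A : Matrix (Fin 3) (Fin 3) ℝ) (hA : IsUnit A) (δ μ ν : Fin 3) :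
    ∑ κ, ∑ l, leviCivita δ κ l * A κ μ * A l ν
      = A.det * ∑ σ, A⁻¹ σ δ * leviCivita σ μ ν := by
  have h : A * A⁻¹ = 1 := mul_nonsing_inv A ((isUnit_iff_isUnit_det A).mp hA)
  have he : ∀ ρ, (∑ σ, A ρ σ * A⁻¹ σ δ) = (if ρ = δ then (1:ℝ) else 0) := by
    intro ρ
    have := congrFun (congrFun h ρ) δ
    simpa [Matrix.mul_apply, Matrix.one_apply] using this
  calc ∑ κ, ∑ l, leviCivita δ κ l * A κ μ * A l ν
      = ∑ κ, ∑ l, (∑ ρ, (if ρ = δ then (1:ℝ) else 0) * leviCivita ρ κ l) * A κ μ * A l ν := by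
        simp
    _ = ∑ κ, ∑ l, (∑ ρ, (∑ σ, A ρ σ * A⁻¹ σ δ) * leviCivita ρ κ l) * A κ μ * A l ν := by
        simp_rw [he]
    _ = ∑ σ, A⁻¹ σ δ * ∑ ρ, ∑ κ, ∑ l, leviCivita ρ κ l * A ρ σ * A κ μ * A l ν := by
        simp only [Fin.sum_univ_three]; ring
    _ = A.det * ∑ σ, A⁻¹ σ δ * leviCivita σ μ ν := by
        simp_rw [eps_det, Finset.mul_sum]; congr 1; ext σ; ring

set_option maxHeartbeats 2000000 in
/-- Under `C ↦ φ_Λ(C)`, the components of the decomposition `C = m·ε + ν∧δ`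
transform as `m ↦ |S|⁻¹ S m Sᵀ` and `ν ↦ Λᵀ ν`, where `S = Λ⁻¹`. -/
theorem decomposition_transforms (C : Fin 3 → Fin 3 → Fin 3 → ℝ)
    (m : Matrix (Fin 3) (Fin 3) ℝ) (ν : Fin 3 → ℝ) (hm : m.IsSymm)
    (hdec : ∀ α β γ, C α β γ =
      (∑ δ, m α δ * leviCivita δ β γ)
        + ν β * (if α = γ then (1:ℝ) else 0) - ν γ * (if α = β then (1:ℝ) else 0))
    (Λ : Matrix (Fin 3) (Fin 3) ℝ) (hΛ : IsUnit Λ) :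
    ∀ α β γ, phiAct Λ C α β γ =
      (∑ δ, ((Λ⁻¹.det)⁻¹ • (Λ⁻¹ * m * Λ⁻¹ᵀ)) α δ * leviCivita δ β γ)
        + (Λᵀ *ᵥ ν) β * (if α = γ then (1:ℝ) else 0)
        - (Λᵀ *ᵥ ν) γ * (if α = β then (1:ℝ) else 0) := by
  intro α β γ
  have hdΛ : IsUnit Λ.det := (isUnit_iff_isUnit_det Λ).mp hΛ
  have hSΛ : Λ⁻¹ * Λ = 1 := nonsing_inv_mul Λ hdΛ
  have he : ∀ i j, (∑ k, Λ⁻¹ i k * Λ k j) = (if i = j then (1:ℝ) else 0) := by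
    intro i j
    have := congrFun (congrFun hSΛ i) j
    simpa [Matrix.mul_apply, Matrix.one_apply] using this
  have hdet : (Λ⁻¹.det)⁻¹ = Λ.det := by
    rw [Matrix.det_nonsing_inv, Ring.inverse_eq_inv', inv_inv]
  have hT1 : (∑ b, ∑ κ, ∑ l, Λ⁻¹ α b * Λ κ β * Λ l γ * (∑ δ, m b δ * leviCivita δ κ l))
      = ∑ δ', ((Λ⁻¹.det)⁻¹ • (Λ⁻¹ * m * Λ⁻¹ᵀ)) α δ' * leviCivita δ' β γ := by
    have step1 : (∑ b, ∑ κ, ∑ l, Λ⁻¹ α b * Λ κ β * Λ l γ * (∑ δ, m b δ * leviCivita δ κ l))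
        = ∑ b, ∑ δ, (Λ⁻¹ α b * m b δ) * (∑ κ, ∑ l, leviCivita δ κ l * Λ κ β * Λ l γ) := by
      simp only [Fin.sum_univ_three]; ring
    rw [step1]
    simp_rw [eps_inv Λ hΛ]
    simp only [Matrix.smul_apply, Matrix.mul_apply, Matrix.transpose_apply, smul_eq_mul, hdet,
      Fin.sum_univ_three]
    ring
  have hT2 : (∑ b, ∑ κ, ∑ l, Λ⁻¹ α b * Λ κ β * Λ l γ * (ν κ * (if b = l then (1:ℝ) else 0)))
      = (Λᵀ *ᵥ ν) β * (if α = γ then (1:ℝ) else 0) := by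
    rw [← he α γ]
    simp only [Matrix.mulVec, Matrix.transpose_apply, dotProduct, Fin.sum_univ_three]
    norm_num [show ((0:Fin 3) = 2) = False by simp, show ((1:Fin 3) = 2) = False by simp,
      show ((2:Fin 3) = 0) = False by simp, show ((2:Fin 3) = 1) = False by simp]; ring
  have hT3 : (∑ b, ∑ κ, ∑ l, Λ⁻¹ α b * Λ κ β * Λ l γ * (ν l * (if b = κ then (1:ℝ) else 0)))
      = (Λᵀ *ᵥ ν) γ * (if α = β then (1:ℝ) else 0) := by
    rw [← he α β]
    simp only [Matrix.mulVec, Matrix.transpose_apply, dotProduct, Fin.sum_univ_three]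
    norm_num [show ((0:Fin 3) = 2) = False by simp, show ((1:Fin 3) = 2) = False by simp,
      show ((2:Fin 3) = 0) = False by simp, show ((2:Fin 3) = 1) = False by simp]; ring
  calc phiAct Λ C α β γ
      = ∑ b, ∑ κ, ∑ l, Λ⁻¹ α b * Λ κ β * Λ l γ *
          ((∑ δ, m b δ * leviCivita δ κ l) + ν κ * (if b = l then (1:ℝ) else 0)
            - ν l * (if b = κ then (1:ℝ) else 0)) := by
        simp only [phiAct]; simp_rw [hdec]
    _ = (∑ b, ∑ κ, ∑ l, Λ⁻¹ α b * Λ κ β * Λ l γ * (∑ δ, m b δ * leviCivita δ κ l))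
        + (∑ b, ∑ κ, ∑ l, Λ⁻¹ α b * Λ κ β * Λ l γ * (ν κ * (if b = l then (1:ℝ) else 0)))
        - (∑ b, ∑ κ, ∑ l, Λ⁻¹ α b * Λ κ β * Λ l γ * (ν l * (if b = κ then (1:ℝ) else 0))) := by
        simp only [Fin.sum_univ_three]; ring
    _ = _ := by rw [hT1, hT2, hT3]
end

section
/- For structure constants C satisfying the Jacobi identity, with decomposition C = m·ε + ν∧δ, the Jacobi identity is equivalent to m^{αβ} ν_β = 0, i.e., ν is a null eigenvector of the symmetric matrix m. -/
open Matrix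

set_option maxHeartbeats 1000000 in
/-- For structure constants with decomposition `C = m·ε + ν∧δ`, the Jacobi identity
is equivalent to `m^{αβ} ν_β = 0`, i.e. `ν` is a null eigenvector of `m`. -/
theorem jacobi_iff_null_eigenvector (C : Fin 3 → Fin 3 → Fin 3 → ℝ)
    (hC : ∀ a b c, C a b c = -C a c b)
    (m : Matrix (Fin 3) (Fin 3) ℝ) (ν : Fin 3 → ℝ) (hm : m.IsSymm)
    (hν : ν = fun a => (1/2 : ℝ) * ∑ ρ, C ρ a ρ)
    (hdec : ∀ α β γ, C α β γ =
      (∑ δ, m α δ * leviCivita δ β γ)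
        + ν β * (if α = γ then (1:ℝ) else 0) - ν γ * (if α = β then (1:ℝ) else 0)) :
    (∀ a b c d, ∑ e, (C e b c * C a e d + C e c d * C a e b + C e d b * C a e c) = 0) ↔
      m *ᵥ ν = 0 := by
  have lc000 : leviCivita 0 0 0 = 0 := by norm_num [leviCivita]
  have lc001 : leviCivita 0 0 1 = 0 := by norm_num [leviCivita]
  have lc002 : leviCivita 0 0 2 = 0 := by norm_num [leviCivita]
  have lc010 : leviCivita 0 1 0 = 0 := by norm_num [leviCivita]
  have lc011 : leviCivita 0 1 1 = 0 := by norm_num [leviCivita]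
  have lc012 : leviCivita 0 1 2 = 1 := by norm_num [leviCivita]
  have lc020 : leviCivita 0 2 0 = 0 := by norm_num [leviCivita]
  have lc021 : leviCivita 0 2 1 = -1 := by norm_num [leviCivita]
  have lc022 : leviCivita 0 2 2 = 0 := by norm_num [leviCivita]
  have lc100 : leviCivita 1 0 0 = 0 := by norm_num [leviCivita]
  have lc101 : leviCivita 1 0 1 = 0 := by norm_num [leviCivita]
  have lc102 : leviCivita 1 0 2 = -1 := by norm_num [leviCivita]
  have lc110 : leviCivita 1 1 0 = 0 := by norm_num [leviCivita]
  have lc111 : leviCivita 1 1 1 = 0 := by norm_num [leviCivita]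
  have lc112 : leviCivita 1 1 2 = 0 := by norm_num [leviCivita]
  have lc120 : leviCivita 1 2 0 = 1 := by norm_num [leviCivita]
  have lc121 : leviCivita 1 2 1 = 0 := by norm_num [leviCivita]
  have lc122 : leviCivita 1 2 2 = 0 := by norm_num [leviCivita]
  have lc200 : leviCivita 2 0 0 = 0 := by norm_num [leviCivita]
  have lc201 : leviCivita 2 0 1 = 1 := by norm_num [leviCivita]
  have lc202 : leviCivita 2 0 2 = 0 := by norm_num [leviCivita]
  have lc210 : leviCivita 2 1 0 = -1 := by norm_num [leviCivita]
  have lc211 : leviCivita 2 1 1 = 0 := by norm_num [leviCivita]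
  have lc212 : leviCivita 2 1 2 = 0 := by norm_num [leviCivita]
  have lc220 : leviCivita 2 2 0 = 0 := by norm_num [leviCivita]
  have lc221 : leviCivita 2 2 1 = 0 := by norm_num [leviCivita]
  have lc222 : leviCivita 2 2 2 = 0 := by norm_num [leviCivita]
  have hs01 : m 1 0 = m 0 1 := hm.apply 0 1
  have hs02 : m 2 0 = m 0 2 := hm.apply 0 2
  have hs12 : m 2 1 = m 1 2 := hm.apply 1 2
  have hCv : ∀ a b c, C a b c =
      m a 0 * leviCivita 0 b c + m a 1 * leviCivita 1 b c + m a 2 * leviCivita 2 b c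
        + ν b * (if a = c then (1:ℝ) else 0) - ν c * (if a = b then (1:ℝ) else 0) := by
    intro a b c
    rw [hdec]
    rw [Fin.sum_univ_three]
  constructor
  · intro h
    have h0 := h 0 0 1 2
    have h1 := h 1 0 1 2
    have h2 := h 2 0 1 2
    simp only [Fin.zero_eta, Fin.mk_one, Fin.reduceFinMk, hCv, Fin.sum_univ_three, lc000, lc001, lc002, lc010, lc011, lc012, lc020, lc021, lc022, lc100, lc101, lc102, lc110, lc111, lc112, lc120, lc121, lc122, lc200, lc201, lc202, lc210, lc211, lc212, lc220, lc221, lc222,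
      show ((0:Fin 3) = 1) = False from by simp, show ((0:Fin 3) = 2) = False from by simp,
      show ((1:Fin 3) = 0) = False from by simp, show ((1:Fin 3) = 2) = False from by simp,
      show ((2:Fin 3) = 0) = False from by simp, show ((2:Fin 3) = 1) = False from by simp,
      if_true, if_false, hs01, hs02, hs12] at h0 h1 h2
    funext i
    fin_cases i <;>
      simp only [Fin.zero_eta, Fin.mk_one, Fin.reduceFinMk, mulVec, dotProduct, Fin.sum_univ_three, Pi.zero_apply, hs01, hs02, hs12] <;> first
        | linear_combination (1/2:ℝ) * h0
        | linear_combination (1/2:ℝ) * h1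
        | linear_combination (1/2:ℝ) * h2
  · intro h a b c d
    have h0 := congrFun h 0
    have h1 := congrFun h 1
    have h2 := congrFun h 2
    simp only [mulVec, dotProduct, Fin.sum_univ_three, Pi.zero_apply, hs01, hs02, hs12] at h0 h1 h2
    fin_cases a <;> fin_cases b <;> fin_cases c <;> fin_cases d <;>
      simp only [Fin.zero_eta, Fin.mk_one, Fin.reduceFinMk, hCv, Fin.sum_univ_three, lc000, lc001, lc002, lc010, lc011, lc012, lc020, lc021, lc022, lc100, lc101, lc102, lc110, lc111, lc112, lc120, lc121, lc122, lc200, lc201, lc202, lc210, lc211, lc212, lc220, lc221, lc222,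
        show ((0:Fin 3) = 1) = False from by simp, show ((0:Fin 3) = 2) = False from by simp,
        show ((1:Fin 3) = 0) = False from by simp, show ((1:Fin 3) = 2) = False from by simp,
        show ((2:Fin 3) = 0) = False from by simp, show ((2:Fin 3) = 1) = False from by simp,
        if_true, if_false, hs01, hs02, hs12] <;>
      first
        | ring1
        | linear_combination (2:ℝ) * h0
        | linear_combination (-2:ℝ) * h0
        | linear_combination (2:ℝ) * h1
        | linear_combination (-2:ℝ) * h1
        | linear_combination (2:ℝ) * h2
        | linear_combination (-2:ℝ) * h2
end
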